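/- arXiv:1712.02028 — 10 statements merged into one kernel-verified Lean document; each statement's English description precedes it below -/
import Mathlib

section
/- Let a and b be coprime positive integers, let M = ⟨a,b⟩ = {α·a + β·b : α, β ∈ ℕ}, and let T(x) denote the number of pairs (x_1, x_2) ∈ ℕ² with x_1·a + x_2·b = x. Then for every natural number x, T(x) = ⌊x/(ab)⌋ + ε(x mod ab), where ε(y) = 1 if y ∈ M and ε(y) = 0 otherwise. -/
open Classical

lemma S_finite (a b : ℕ) (ha : 0 < a) (hb : 0 < b) (x : ℕ) :
    {p : ℕ × ℕ | p.1 * a + p.2 * b = x}.Finite := by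
  apply Set.Finite.subset ((Set.finite_Iic x).prod (Set.finite_Iic x))
  rintro ⟨p1, p2⟩ h
  simp only [Set.mem_setOf_eq] at h
  simp only [Set.mem_prod, Set.mem_Iic]
  constructor
  · exact le_trans (Nat.le_mul_of_pos_right _ ha) (Nat.le.intro h)
  · exact le_trans (Nat.le_mul_of_pos_right _ hb) (Nat.le.intro (by rwa [Nat.add_comm] at h))

lemma unique_small (a b : ℕ) (hb : 0 < b) (hab : Nat.Coprime a b) {n x1 x2 y1 y2 : ℕ}
    (hx : x1 * a + x2 * b = n) (hy : y1 * a + y2 * b = n)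
    (hx1 : x1 < b) (hy1 : y1 < b) : x1 = y1 ∧ x2 = y2 := by
  have h1 : x1 * a ≡ y1 * a [MOD b] := by
    have e1 : x1 * a ≡ x1 * a + x2 * b [MOD b] :=
      (Nat.modEq_iff_dvd' (by omega)).2 ⟨x2, by rw [Nat.add_sub_cancel_left, Nat.mul_comm]⟩
    have e2 : y1 * a ≡ y1 * a + y2 * b [MOD b] :=
      (Nat.modEq_iff_dvd' (by omega)).2 ⟨y2, by rw [Nat.add_sub_cancel_left, Nat.mul_comm]⟩
    calc x1 * a ≡ x1 * a + x2 * b [MOD b] := e1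
      _ = y1 * a + y2 * b := by rw [hx, hy]
      _ ≡ y1 * a [MOD b] := e2.symm
  have h2 : x1 ≡ y1 [MOD b] := Nat.ModEq.cancel_right_of_coprime hab.symm h1
  have h3 : x1 = y1 := by
    have := h2
    unfold Nat.ModEq at this
    rwa [Nat.mod_eq_of_lt hx1, Nat.mod_eq_of_lt hy1] at this
  subst h3
  refine ⟨rfl, ?_⟩
  have hxy : x2 * b = y2 * b := by omega
  exact Nat.eq_of_mul_eq_mul_right hb hxy

lemma exists_small (a b : ℕ) (ha : 0 < a) (hb : 0 < b) (hab : Nat.Coprime a b) {n : ℕ}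
    (hn : a * b ≤ n) : ∃ x1 x2 : ℕ, x1 * a + x2 * b = n ∧ x1 < b := by
  haveI : NeZero b := ⟨hb.ne'⟩
  set u : (ZMod b)ˣ := ZMod.unitOfCoprime a hab
  set x1 : ℕ := ((n : ZMod b) * ((u⁻¹ : (ZMod b)ˣ) : ZMod b)).val with hx1def
  have hx1lt : x1 < b := ZMod.val_lt _
  have hcast : (x1 : ZMod b) * a = (n : ZMod b) := by
    rw [hx1def, ZMod.natCast_val, ZMod.cast_id]
    have hu : ((u : (ZMod b)ˣ) : ZMod b) = (a : ZMod b) := rfl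
    rw [← hu, mul_assoc, Units.inv_mul, mul_one]
  have hle : x1 * a ≤ n := by
    have h1 : x1 * a ≤ (b - 1) * a := Nat.mul_le_mul_right _ (by omega)
    have h2 : (b - 1) * a < b * a := (Nat.mul_lt_mul_right ha).mpr (by omega)
    have h3 : b * a = a * b := mul_comm _ _
    omega
  have hdvd : b ∣ n - x1 * a := by
    have hz : ((n - x1 * a : ℕ) : ZMod b) = 0 := by
      rw [Nat.cast_sub hle, Nat.cast_mul, hcast, sub_self]
    exact (ZMod.natCast_eq_zero_iff _ _).1 hz
  refine ⟨x1, (n - x1 * a) / b, ?_, hx1lt⟩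
  rw [Nat.div_mul_cancel hdvd]
  omega

lemma step_lemma (a b : ℕ) (ha : 0 < a) (hb : 0 < b) (hab : Nat.Coprime a b) (x : ℕ) :
    {p : ℕ × ℕ | p.1 * a + p.2 * b = x + a * b}.ncard
      = {p : ℕ × ℕ | p.1 * a + p.2 * b = x}.ncard + 1 := by
  obtain ⟨x1, x2, hsol, hx1⟩ := exists_small a b ha hb hab (Nat.le_add_left (a*b) x)
  have key : {p : ℕ × ℕ | p.1 * a + p.2 * b = x + a * b}
      = insert (x1, x2) ((fun q : ℕ × ℕ => (q.1 + b, q.2)) '' {p : ℕ × ℕ | p.1 * a + p.2 * b = x}) := by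
    ext ⟨p1, p2⟩
    simp only [Set.mem_insert_iff, Set.mem_image, Set.mem_setOf_eq, Prod.mk.injEq, Prod.ext_iff]
    constructor
    · intro h
      by_cases hpb : p1 < b
      · left
        exact unique_small a b hb hab h hsol hpb hx1
      · right
        push_neg at hpb
        refine ⟨(p1 - b, p2), ?_, by omega, rfl⟩
        have hsplit : p1 * a = (p1 - b) * a + b * a := by
          rw [← Nat.add_mul, Nat.sub_add_cancel hpb]
        have hcm : b * a = a * b := mul_comm _ _
        show (p1 - b) * a + p2 * b = x
        linarith
    · rintro (⟨h1, h2⟩ | ⟨⟨q1, q2⟩, hq, h1, h2⟩)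
      · subst h1; subst h2; exact hsol
      · simp only at h1 h2
        subst h1; subst h2
        simp only [Set.mem_setOf_eq] at hq ⊢
        have : (q1 + b) * a = q1 * a + b * a := by ring
        have hcm : b * a = a * b := mul_comm _ _
        linarith
  have hinj : Function.Injective (fun q : ℕ × ℕ => (q.1 + b, q.2)) := by
    rintro ⟨q1, q2⟩ ⟨r1, r2⟩ h
    simp only [Prod.mk.injEq] at h
    exact Prod.ext (by omega) h.2
  have hnm : (x1, x2) ∉ (fun q : ℕ × ℕ => (q.1 + b, q.2)) '' {p : ℕ × ℕ | p.1 * a + p.2 * b = x} := by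
    rintro ⟨⟨q1, q2⟩, hq, heq⟩
    simp only [Prod.mk.injEq] at heq
    omega
  rw [key, Set.ncard_insert_of_notMem hnm ((S_finite a b ha hb x).image _),
    Set.ncard_image_of_injective _ hinj]

lemma base_lemma (a b : ℕ) (ha : 0 < a) (hb : 0 < b) (hab : Nat.Coprime a b) {x : ℕ}
    (hx : x < a * b) :
    {p : ℕ × ℕ | p.1 * a + p.2 * b = x}.ncard
      = if ∃ α β : ℕ, α * a + β * b = x then 1 else 0 := by
  have hcm : b * a = a * b := mul_comm _ _
  split_ifs with h
  · obtain ⟨α, β, hαβ⟩ := h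
    have hset : {p : ℕ × ℕ | p.1 * a + p.2 * b = x} = {(α, β)} := by
      ext ⟨p1, p2⟩
      simp only [Set.mem_setOf_eq, Set.mem_singleton_iff, Prod.mk.injEq]
      constructor
      · intro hp
        have hp1 : p1 < b := by
          by_contra hc
          push_neg at hc
          have h2 : b * a ≤ p1 * a := Nat.mul_le_mul_right _ hc
          have h3 : p1 * a ≤ x := Nat.le.intro hp
          omega
        have hα1 : α < b := by
          by_contra hc
          push_neg at hc
          have h2 : b * a ≤ α * a := Nat.mul_le_mul_right _ hc
          have h3 : α * a ≤ x := Nat.le.intro hαβ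
          omega
        exact unique_small a b hb hab hp hαβ hp1 hα1
      · rintro ⟨h1, h2⟩; subst h1; subst h2; exact hαβ
    rw [hset, Set.ncard_singleton]
  · have hset : {p : ℕ × ℕ | p.1 * a + p.2 * b = x} = ∅ := by
      ext ⟨p1, p2⟩
      simp only [Set.mem_setOf_eq, Set.mem_empty_iff_false, iff_false]
      intro hp
      exact h ⟨p1, p2, hp⟩
    rw [hset, Set.ncard_empty]

/-- For coprime positive integers `a, b`, the denumerant satisfies
`T x = ⌊x/(ab)⌋ + ε(x % (ab))` where `ε(y) = 1` iff `y ∈ ⟨a,b⟩`. -/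
theorem denumerant_two_gens (a b : ℕ) (ha : 0 < a) (hb : 0 < b) (hab : Nat.Coprime a b)
    (T : ℕ → ℕ) (hT : ∀ x, T x = {p : ℕ × ℕ | p.1 * a + p.2 * b = x}.ncard) (x : ℕ) :
    T x = x / (a * b) + (if ∃ α β : ℕ, α * a + β * b = x % (a * b) then 1 else 0) := by
  rw [hT]
  clear hT
  induction x using Nat.strong_induction_on with
  | _ x ih =>
    have hab0 : 0 < a * b := Nat.mul_pos ha hb
    rcases lt_or_ge x (a * b) with h | h
    · rw [Nat.div_eq_of_lt h, Nat.mod_eq_of_lt h, base_lemma a b ha hb hab h]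
      simp
    · have hx : x = (x - a * b) + a * b := by omega
      rw [hx, step_lemma a b ha hb hab, ih (x - a * b) (by omega),
        Nat.add_div_right _ hab0, Nat.add_mod_right]
      ring
end

section
/- Let a and b be coprime positive integers, let x be a natural number, and set y = ⌊x/b⌋. Then Σ_{j=0}^{y mod a} [a ∣ ((x mod b) + j·b)] = ε(x mod (ab)), where [·] is the indicator of the divisibility condition and ε(z) = 1 if z ∈ ⟨a,b⟩ = {α·a + β·b : α, β ∈ ℕ} and ε(z) = 0 otherwise. -/
open Classical

/-!
Write `x % (a * b) = r + q * b` with `r = x % b < b` and `q = (x / b) % a < a`. Since `r < b`, a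
representation `α * a + β * b = r + q * b` forces `β ≤ q`, so `r + q * b ∈ ⟨a, b⟩` exactly when
`a ∣ r + j * b` for some `j ≤ q` (take `j = q - β`). As `b` is invertible mod `a`, the numbers
`r + j * b` with `0 ≤ j < a` are pairwise incongruent mod `a`, so at most one summand is nonzero.
-/

theorem Finset.sum_boole_eq_ite_exists {ι M : Type*} [AddCommMonoidWithOne M] (s : Finset ι)
    (p : ι → Prop) [DecidablePred p] (hp : ∀ i ∈ s, ∀ j ∈ s, p i → p j → i = j) :
    (∑ i ∈ s, if p i then (1 : M) else 0) = if ∃ i ∈ s, p i then 1 else 0 := by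
  split_ifs with h
  · obtain ⟨i, hi, hpi⟩ := h
    rw [Finset.sum_eq_single_of_mem i hi fun j hj hji => if_neg fun hpj => hji (hp j hj i hi hpj hpi),
      if_pos hpi]
  · exact Finset.sum_eq_zero fun i hi => if_neg fun hpi => h ⟨i, hi, hpi⟩

theorem Nat.mod_mul_eq_mod_add_div_mod_mul (x a b : ℕ) : x % (a * b) = x % b + x / b % a * b := by
  rw [Nat.mul_comm a b, Nat.mod_mul, Nat.mul_comm b]

theorem Nat.eq_of_dvd_add_mul_of_dvd_add_mul {a b r j j' : ℕ} (hab : Nat.Coprime a b)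
    (hj : j < a) (hj' : j' < a) (h : a ∣ r + j * b) (h' : a ∣ r + j' * b) : j = j' := by
  have hcongr : r + j * b ≡ r + j' * b [MOD a] :=
    (Nat.modEq_zero_iff_dvd.mpr h).trans (Nat.modEq_zero_iff_dvd.mpr h').symm
  exact ((hcongr.add_left_cancel' r).cancel_right_of_coprime hab).eq_of_lt_of_lt hj hj'

theorem Nat.exists_add_mul_eq_add_mul_iff {a b r q : ℕ} (hr : r < b) :
    (∃ α β : ℕ, α * a + β * b = r + q * b) ↔ ∃ j ≤ q, a ∣ r + j * b := by
  constructor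
  · rintro ⟨α, β, h⟩
    have hβ : β ≤ q := by
      by_contra! hβ
      nlinarith
    refine ⟨q - β, Nat.sub_le q β, α, ?_⟩
    rw [Nat.sub_mul]
    have : β * b ≤ q * b := Nat.mul_le_mul_right b hβ
    rw [Nat.mul_comm a α]
    omega
  · rintro ⟨j, hj, hdvd⟩
    refine ⟨(r + j * b) / a, q - j, ?_⟩
    rw [Nat.div_mul_cancel hdvd, Nat.sub_mul]
    have : j * b ≤ q * b := Nat.mul_le_mul_right b hj
    omega

/-- For coprime positive integers `a, b`, a natural number `x`, and `y = ⌊x / b⌋`: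
`∑_{j=0}^{y % a} [a ∣ (x % b + j * b)] = ε(x % (a*b))`, where `ε(z) = 1` iff
`z ∈ ⟨a,b⟩ = {α·a + β·b : α, β ∈ ℕ}`. -/
theorem indicator_sum_eq_membership (a b : ℕ) (ha : 0 < a) (hb : 0 < b)
    (hab : Nat.Coprime a b) (x : ℕ) :
    (∑ j ∈ Finset.range ((x / b) % a + 1), (if a ∣ x % b + j * b then 1 else 0)) =
      (if ∃ α β : ℕ, α * a + β * b = x % (a * b) then 1 else 0) := by
  have hq : x / b % a < a := Nat.mod_lt _ ha
  rw [Nat.mod_mul_eq_mod_add_div_mod_mul, Nat.exists_add_mul_eq_add_mul_iff (Nat.mod_lt x hb),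
    Finset.sum_boole_eq_ite_exists]
  · congr 1
    simp only [Finset.mem_range, Nat.lt_succ_iff]
  · intro j hj j' hj'
    rw [Finset.mem_range] at hj hj'
    exact Nat.eq_of_dvd_add_mul_of_dvd_add_mul hab (by omega) (by omega)
end

section
/- Let a and b be coprime positive integers, and let T(x) denote the number of pairs (x_1, x_2) ∈ ℕ² with x_1·a + x_2·b = x. If x = α·a + β·b for some α, β ∈ ℕ, then T(x) = ⌊α/b⌋ + ⌊β/a⌋ + 1. -/
/-- For coprime positive integers `a, b`, if `x = α·a + β·b` with `α, β ∈ ℕ`, then the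
denumerant satisfies `T x = ⌊α/b⌋ + ⌊β/a⌋ + 1`. -/
theorem denumerant_of_representation (a b : ℕ) (ha : 0 < a) (hb : 0 < b)
    (hab : Nat.Coprime a b)
    (T : ℕ → ℕ) (hT : ∀ x, T x = {p : ℕ × ℕ | p.1 * a + p.2 * b = x}.ncard)
    (x α β : ℕ) (hx : x = α * a + β * b) :
    T x = α / b + β / a + 1 := by
  subst hx
  rw [hT]
  set qa := α / b with hqa
  set ra := α % b with hra
  set qb := β / a with hqb
  set rb := β % a with hrb
  have hα : α = b * qa + ra := (Nat.div_add_mod α b).symm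
  have hβ : β = a * qb + rb := (Nat.div_add_mod β a).symm
  have hrb_lt : rb < a := Nat.mod_lt _ ha
  set f : ℕ → ℕ × ℕ := fun i => (ra + i * b, (qa + qb - i) * a + rb) with hf
  have key : ∀ i, i ≤ qa + qb → (f i).1 * a + (f i).2 * b = α * a + β * b := by
    intro i hi
    have hij : i + (qa + qb - i) = qa + qb := by omega
    show (ra + i * b) * a + ((qa + qb - i) * a + rb) * b = α * a + β * b
    calc (ra + i * b) * a + ((qa + qb - i) * a + rb) * b
        = ra * a + rb * b + (i + (qa + qb - i)) * (a * b) := by ring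
      _ = ra * a + rb * b + (qa + qb) * (a * b) := by rw [hij]
      _ = (b * qa + ra) * a + (a * qb + rb) * b := by ring
      _ = α * a + β * b := by rw [← hα, ← hβ]
  have hinj : Function.Injective f := by
    intro i i' h
    have h1 : ra + i * b = ra + i' * b := congrArg Prod.fst h
    have : i * b = i' * b := by omega
    exact Nat.eq_of_mul_eq_mul_right hb this
  have hset : {p : ℕ × ℕ | p.1 * a + p.2 * b = α * a + β * b}
      = ↑((Finset.range (qa + qb + 1)).image f) := by
    ext p
    obtain ⟨p1, p2⟩ := p
    simp only [Set.mem_setOf_eq, Finset.coe_image, Set.mem_image, Finset.mem_coe,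
      Finset.mem_range]
    constructor
    · intro hp
      have hmod : p1 % b = ra := by
        have h1 : p1 * a ≡ α * a [MOD b] := by
          have e1 : (p1 * a) % b = (p1 * a + p2 * b) % b := (Nat.add_mul_mod_self_right _ _ _).symm
          have e2 : (α * a) % b = (α * a + β * b) % b := (Nat.add_mul_mod_self_right _ _ _).symm
          unfold Nat.ModEq
          rw [e1, e2, hp]
        have h2 : p1 ≡ α [MOD b] := h1.cancel_right_of_coprime hab.symm
        exact h2
      set i := p1 / b with hi
      have hp1 : p1 = ra + i * b := by
        have h5 := Nat.div_add_mod p1 b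
        have h6 : i * b = b * (p1 / b) := by rw [hi]; ring
        omega
      have hle : p1 * a ≤ α * a + β * b := by omega
      have hib : i ≤ qa + qb := by
        by_contra hcon
        push_neg at hcon
        have h3 : (qa + qb + 1) * b + ra ≤ p1 := by
          have : (qa + qb + 1) * b ≤ i * b := Nat.mul_le_mul_right b hcon
          omega
        have h4 : ((qa + qb + 1) * b + ra) * a ≤ p1 * a := Nat.mul_le_mul_right a h3
        nlinarith [hα, hβ, hrb_lt, hb]
      refine ⟨i, by omega, ?_⟩
      have hk := key i hib
      have hfst : (f i).1 = p1 := by simp [hf, hp1]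
      have hsnd : (f i).2 = p2 := by
        rw [hfst] at hk
        have : (f i).2 * b = p2 * b := by omega
        exact Nat.eq_of_mul_eq_mul_right hb this
      have : f i = (p1, p2) := Prod.ext hfst hsnd
      exact this
    · rintro ⟨i, hi, heq⟩
      have hk := key i (by omega)
      rw [heq] at hk
      exact hk
  rw [hset, Set.ncard_coe_finset, Finset.card_image_of_injective _ hinj, Finset.card_range]
end

section
/- Let a and b be coprime positive integers, and let T(x) denote the number of pairs (x_1, x_2) ∈ ℕ² with x_1·a + x_2·b = x. If x ∈ ⟨a,b⟩ = {α·a + β·b : α, β ∈ ℕ}, then for every natural number k, T(x + k·a·b) = T(x) + k. -/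
lemma denum_finite (a b : ℕ) (ha : 0 < a) (hb : 0 < b) (y : ℕ) :
    {p : ℕ × ℕ | p.1 * a + p.2 * b = y}.Finite := by
  apply (Set.finite_Iic ((y, y) : ℕ × ℕ)).subset
  rintro ⟨u, v⟩ hp
  simp only [Set.mem_setOf_eq] at hp
  constructor
  · have : u ≤ u * a := Nat.le_mul_of_pos_right u ha
    omega
  · have : v ≤ v * b := Nat.le_mul_of_pos_right v hb
    omega

lemma denum_step (a b : ℕ) (ha : 0 < a) (hb : 0 < b) (hab : Nat.Coprime a b)
    (x : ℕ) (hx : ∃ α β : ℕ, α * a + β * b = x) :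
    {p : ℕ × ℕ | p.1 * a + p.2 * b = x + a * b}.ncard
      = {p : ℕ × ℕ | p.1 * a + p.2 * b = x}.ncard + 1 := by
  obtain ⟨α, β, hαβ⟩ := hx
  set r := α % b with hr
  set s := β + (α / b) * a + a with hs
  have hrb : r < b := Nat.mod_lt _ hb
  have hrs : r * a + s * b = x + a * b := by
    have hdiv : α = b * (α / b) + r := (Nat.div_add_mod α b).symm ▸ by omega
    calc r * a + s * b = r * a + (β + (α / b) * a + a) * b := rfl
      _ = (b * (α / b) + r) * a + β * b + a * b := by ring
      _ = α * a + β * b + a * b := by rw [← hdiv]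
      _ = x + a * b := by rw [hαβ]
  -- uniqueness of small solutions
  have huniq : ∀ p : ℕ × ℕ, p.1 * a + p.2 * b = x + a * b → p.1 < b → p = (r, s) := by
    rintro ⟨u, v⟩ hp hub
    simp only [Set.mem_setOf_eq] at hp
    have hmod : u * a ≡ r * a [MOD b] := by
      have h1 : (u * a + v * b) % b = (r * a + s * b) % b := by rw [hp, hrs]
      simpa [Nat.ModEq, Nat.add_mul_mod_self_right] using h1
    have hur : u ≡ r [MOD b] := hmod.cancel_right_of_coprime (Nat.Coprime.gcd_eq_one hab.symm)
    have hu : u = r := (Nat.ModEq.eq_of_lt_of_lt hur hub hrb)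
    have hv : v = s := by
      subst hu
      have : v * b = s * b := by omega
      exact Nat.eq_of_mul_eq_mul_right hb this
    simp [hu, hv]
  have hset : {p : ℕ × ℕ | p.1 * a + p.2 * b = x + a * b}
      = insert (r, s) ((fun p : ℕ × ℕ => (p.1 + b, p.2)) ''
          {p : ℕ × ℕ | p.1 * a + p.2 * b = x}) := by
    ext ⟨u, v⟩
    simp only [Set.mem_setOf_eq, Set.mem_insert_iff, Set.mem_image, Prod.mk.injEq, Prod.exists]
    constructor
    · intro hp
      by_cases hub : u < b
      · left
        have := huniq (u, v) hp hub
        simpa [Prod.ext_iff] using this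
      · right
        refine ⟨u - b, v, ?_, by omega, rfl⟩
        have h1 : b * a ≤ u * a := Nat.mul_le_mul_right a (by omega)
        have h2 : (u - b) * a = u * a - b * a := Nat.sub_mul u b a
        have h3 : a * b = b * a := Nat.mul_comm a b
        omega
    · rintro (⟨h1, h2⟩ | ⟨u', v', hp, h1, h2⟩)
      · subst h1; subst h2; exact hrs
      · subst h1; subst h2
        have h3 : (u' + b) * a = u' * a + b * a := Nat.add_mul u' b a
        have h4 : a * b = b * a := Nat.mul_comm a b
        omega
  have hinj : Function.Injective (fun p : ℕ × ℕ => (p.1 + b, p.2)) := by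
    rintro ⟨u, v⟩ ⟨u', v'⟩ h
    simp only [Prod.mk.injEq] at h
    exact Prod.ext (by omega) h.2
  have hnotmem : (r, s) ∉ (fun p : ℕ × ℕ => (p.1 + b, p.2)) ''
      {p : ℕ × ℕ | p.1 * a + p.2 * b = x} := by
    rintro ⟨⟨u, v⟩, _, h⟩
    simp only [Prod.mk.injEq] at h
    omega
  rw [hset, Set.ncard_insert_of_notMem hnotmem
      (((denum_finite a b ha hb x).image _)),
    Set.ncard_image_of_injective _ hinj]

/-- For coprime positive integers `a, b`, if `x ∈ ⟨a,b⟩` then for every `k ∈ ℕ` the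
denumerant satisfies `T (x + k·a·b) = T x + k`. -/
theorem denumerant_add_multiples (a b : ℕ) (ha : 0 < a) (hb : 0 < b)
    (hab : Nat.Coprime a b)
    (T : ℕ → ℕ) (hT : ∀ x, T x = {p : ℕ × ℕ | p.1 * a + p.2 * b = x}.ncard)
    (x : ℕ) (hx : ∃ α β : ℕ, α * a + β * b = x) (k : ℕ) :
    T (x + k * a * b) = T x + k := by
  induction k with
  | zero => simp
  | succ n ih =>
    have hx' : ∃ α β : ℕ, α * a + β * b = x + n * a * b := by
      obtain ⟨α, β, h⟩ := hx
      exact ⟨α + n * b, β, by rw [Nat.add_mul]; rw [← h]; ring⟩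
    have heq : x + (n + 1) * a * b = (x + n * a * b) + a * b := by ring
    rw [heq, hT, denum_step a b ha hb hab _ hx', ← hT, ih]
    omega
end

section
/- Let a and b be coprime positive integers, and let T(x) denote the number of pairs (x_1, x_2) ∈ ℕ² with x_1·a + x_2·b = x. If x is a natural number with 0 ≤ x ≤ ab − 1 and x ∉ ⟨a,b⟩ = {α·a + β·b : α, β ∈ ℕ}, then T(x + ab) = 1. -/
/-- For coprime positive integers `a, b`, if `0 ≤ x ≤ ab - 1` and `x ∉ ⟨a,b⟩`, then the
denumerant satisfies `T (x + ab) = 1`. -/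
theorem denumerant_of_gap_plus_ab (a b : ℕ) (ha : 0 < a) (hb : 0 < b)
    (hab : Nat.Coprime a b)
    (T : ℕ → ℕ) (hT : ∀ x, T x = {p : ℕ × ℕ | p.1 * a + p.2 * b = x}.ncard)
    (x : ℕ) (hx : x ≤ a * b - 1) (hmem : ¬ ∃ α β : ℕ, α * a + β * b = x) :
    T (x + a * b) = 1 := by
  haveI : NeZero b := ⟨hb.ne'⟩
  have haunit : IsUnit (a : ZMod b) := (ZMod.isUnit_iff_coprime a b).mpr hab
  set u : ℕ := ((x : ZMod b) * (a : ZMod b)⁻¹).val with hu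
  have hucast : (u : ZMod b) = (x : ZMod b) * (a : ZMod b)⁻¹ := by
    simp [hu, ZMod.natCast_val, ZMod.cast_id]
  have hult : u < b := ZMod.val_lt _
  have huax : (u * a : ZMod b) = (x : ZMod b) := by
    push_cast
    rw [hucast, mul_assoc, ZMod.inv_mul_of_unit _ haunit, mul_one]
  have hmod : u * a ≡ x [MOD b] :=
    (ZMod.natCast_eq_natCast_iff _ _ _).mp (by push_cast; exact huax)
  have hle : u * a ≤ x + a * b := by
    have : u * a ≤ b * a := Nat.mul_le_mul_right a hult.le
    nlinarith
  have hmod2 : u * a ≡ x + a * b [MOD b] := by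
    calc u * a ≡ x [MOD b] := hmod
    _ ≡ x + a * b [MOD b] := (Nat.modEq_iff_dvd' le_self_add).mpr (by
        simp [Nat.add_sub_cancel_left, Dvd.dvd.mul_left])
  have hdvd : b ∣ (x + a * b - u * a) := (Nat.modEq_iff_dvd' hle).mp hmod2
  set v : ℕ := (x + a * b - u * a) / b with hv
  have hvb : v * b = x + a * b - u * a := Nat.div_mul_cancel hdvd
  have hmemuv : u * a + v * b = x + a * b := by omega
  -- every member (p, q) has p < b and q < a
  have hkey : ∀ p q : ℕ, p * a + q * b = x + a * b → p = u ∧ q = v := by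
    intro p q hpq
    have hplt : p < b := by
      by_contra hge
      push_neg at hge
      refine hmem ⟨p - b, q, ?_⟩
      have h1 : (p - b) * a = p * a - b * a := Nat.sub_mul p b a
      have h2 : b * a ≤ p * a := Nat.mul_le_mul_right a hge
      have h3 : a * b = b * a := Nat.mul_comm a b
      omega
    have hpeq : (p : ZMod b) = (u : ZMod b) := by
      have hc : ((p * a : ℕ) : ZMod b) = ((u * a : ℕ) : ZMod b) := by
        have h1 : ((p * a + q * b : ℕ) : ZMod b) = ((x + a * b : ℕ) : ZMod b) := by
          rw [hpq]
        push_cast at h1 ⊢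
        simp [ZMod.natCast_self] at h1
        rw [huax]
        push_cast
        simpa using h1
      push_cast at hc
      exact haunit.mul_right_cancel hc
    have hpu : p = u := by
      have := congrArg ZMod.val hpeq
      rwa [ZMod.val_cast_of_lt hplt, ZMod.val_cast_of_lt hult] at this
    refine ⟨hpu, ?_⟩
    rw [hpu] at hpq
    have : q * b = v * b := by omega
    exact Nat.eq_of_mul_eq_mul_right hb this
  rw [hT]
  apply Set.ncard_eq_one.mpr
  refine ⟨(u, v), Set.eq_singleton_iff_unique_mem.mpr ⟨hmemuv, ?_⟩⟩
  rintro ⟨p, q⟩ hpq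
  obtain ⟨h1, h2⟩ := hkey p q hpq
  simp [h1, h2]
end

section
/- Let a and b be coprime positive integers, and let T(x) denote the number of pairs (x_1, x_2) ∈ ℕ² with x_1·a + x_2·b = x. Then for every natural number x, T(x + ab) = T(x) + 1. -/
/-- For coprime positive integers `a, b` and every natural number `x`, the denumerant
satisfies `T (x + ab) = T x + 1`. -/
theorem denumerant_add_ab (a b : ℕ) (ha : 0 < a) (hb : 0 < b) (hab : Nat.Coprime a b)
    (T : ℕ → ℕ) (hT : ∀ x, T x = {p : ℕ × ℕ | p.1 * a + p.2 * b = x}.ncard) (x : ℕ) :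
    T (x + a * b) = T x + 1 := by
  classical
  have hfin : {p : ℕ × ℕ | p.1 * a + p.2 * b = x}.Finite := by
    apply Set.Finite.subset ((Set.finite_Iic x).prod (Set.finite_Iic x))
    rintro ⟨u, v⟩ h
    simp only [Set.mem_setOf_eq] at h
    constructor <;> simp only [Set.mem_Iic] <;> nlinarith
  haveI : NeZero b := ⟨hb.ne'⟩
  obtain ⟨r, hrb, hmod⟩ : ∃ r, r < b ∧ r * a ≡ x [MOD b] := by
    refine ⟨((x : ZMod b) * (a : ZMod b)⁻¹).val, ZMod.val_lt _, ?_⟩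
    rw [← ZMod.natCast_eq_natCast_iff]
    push_cast
    rw [ZMod.natCast_val, ZMod.cast_id]
    have hu : IsUnit ((a : ZMod b)) := (ZMod.isUnit_iff_coprime a b).mpr hab
    rw [mul_assoc, ZMod.inv_mul_of_unit _ hu, mul_one]
  have hmod2 : r * a ≡ x + a * b [MOD b] := by
    unfold Nat.ModEq
    rw [hmod]
    conv_rhs => rw [mul_comm a b, Nat.add_mul_mod_self_left]
  have hle : r * a ≤ x + a * b := by nlinarith
  have hdvd : b ∣ (x + a * b - r * a) := (Nat.modEq_iff_dvd' hle).mp hmod2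
  obtain ⟨s, hs⟩ : ∃ s, r * a + s * b = x + a * b := by
    refine ⟨(x + a * b - r * a) / b, ?_⟩
    have h1 := Nat.div_mul_cancel hdvd
    omega
  have hset : {p : ℕ × ℕ | p.1 * a + p.2 * b = x + a * b} =
      insert (r, s) ((fun p : ℕ × ℕ => (p.1 + b, p.2)) ''
        {p : ℕ × ℕ | p.1 * a + p.2 * b = x}) := by
    ext ⟨u, v⟩
    simp only [Set.mem_setOf_eq, Set.mem_insert_iff, Set.mem_image, Prod.mk.injEq,
      Prod.ext_iff]
    constructor
    · intro h
      by_cases hub : u < b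
      · left
        have h1 : u * a ≡ r * a [MOD b] := by
          unfold Nat.ModEq
          rw [← Nat.add_mul_mod_self_right (u * a) v b,
            ← Nat.add_mul_mod_self_right (r * a) s b, h, hs]
        have h2 : u ≡ r [MOD b] := Nat.ModEq.cancel_right_of_coprime hab.symm h1
        have hur : u = r := by
          have := h2
          unfold Nat.ModEq at this
          rwa [Nat.mod_eq_of_lt hub, Nat.mod_eq_of_lt hrb] at this
        refine ⟨hur, ?_⟩
        rw [hur] at h
        have hvs : v * b = s * b := by omega
        exact Nat.eq_of_mul_eq_mul_right hb hvs
      · right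
        refine ⟨(u - b, v), ?_, ?_, rfl⟩
        · simp only [Set.mem_setOf_eq]
          have : (u - b) * a = u * a - b * a := by
            rw [Nat.sub_mul]
          nlinarith [Nat.sub_add_cancel (le_of_not_gt hub)]
        · simp only
          omega
    · rintro (⟨hu, hv⟩ | ⟨⟨p1, p2⟩, hp, he1, he2⟩)
      · rw [hu, hv]; exact hs
      · simp only [Set.mem_setOf_eq] at hp
        subst he1
        subst he2
        simp only at *
        nlinarith
  rw [hT, hT, hset]
  have hinj : Function.Injective (fun p : ℕ × ℕ => (p.1 + b, p.2)) := by
    rintro ⟨u1, u2⟩ ⟨v1, v2⟩ h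
    simp only [Prod.mk.injEq] at h
    exact Prod.ext (by omega) h.2
  have hnotmem : (r, s) ∉ (fun p : ℕ × ℕ => (p.1 + b, p.2)) ''
      {p : ℕ × ℕ | p.1 * a + p.2 * b = x} := by
    rintro ⟨⟨p1, p2⟩, _, he⟩
    simp only [Prod.mk.injEq] at he
    omega
  rw [Set.ncard_insert_of_notMem hnotmem (hfin.image _),
    Set.ncard_image_of_injective _ hinj]
end

section
/- Let m and c be coprime positive integers and let r be a natural number with 0 ≤ r < c. Then Σ_{j=0}^{m-1} ⌊(r + j·c)/m⌋ = r + (m − 1)(c − 1)/2. -/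
/-- For coprime positive integers `m, c` and `0 ≤ r < c`:
`∑_{j=0}^{m-1} ⌊(r + j·c)/m⌋ = r + (m-1)(c-1)/2`, stated in the doubled integer form
`2 · ∑_{j=0}^{m-1} ⌊(r + j·c)/m⌋ = 2r + (m-1)(c-1)`. -/
theorem hermite_reciprocity_shifted (m c : ℕ) (hm : 0 < m) (hc : 0 < c)
    (hmc : Nat.Coprime m c) (r : ℕ) (hr : r < c) :
    2 * ∑ j ∈ Finset.range m, (r + j * c) / m = 2 * r + (m - 1) * (c - 1) := by
  set f : ℕ → ℕ := fun j => (r + j * c) % m with hf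
  have hinj : Set.InjOn f (Finset.range m) := by
    intro j1 h1 j2 h2 hEq
    simp only [Finset.coe_range, Set.mem_Iio] at h1 h2
    have hmod : (r + j1 * c) ≡ (r + j2 * c) [MOD m] := hEq
    have h3 : j1 * c ≡ j2 * c [MOD m] := (Nat.ModEq.add_left_cancel' r hmod)
    have h4 : j1 ≡ j2 [MOD m] := h3.cancel_right_of_coprime (by simpa [Nat.Coprime] using hmc)
    have := h4
    unfold Nat.ModEq at this
    rw [Nat.mod_eq_of_lt h1, Nat.mod_eq_of_lt h2] at this
    exact this
  have hsub : (Finset.range m).image f ⊆ Finset.range m := by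
    intro x hx
    simp only [Finset.mem_image] at hx
    obtain ⟨j, _, rfl⟩ := hx
    exact Finset.mem_range.mpr (Nat.mod_lt _ hm)
  have himg : (Finset.range m).image f = Finset.range m := by
    apply Finset.eq_of_subset_of_card_le hsub
    rw [Finset.card_image_of_injOn hinj]
  have hsum_mod : ∑ j ∈ Finset.range m, (r + j * c) % m = ∑ i ∈ Finset.range m, i := by
    have := Finset.sum_image (f := id) (g := f) (fun x hx y hy h => hinj hx hy h)
    simpa [himg] using this.symm
  -- division identity summed
  have H : m * (∑ j ∈ Finset.range m, (r + j * c) / m)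
      + ∑ j ∈ Finset.range m, (r + j * c) % m
      = ∑ j ∈ Finset.range m, (r + j * c) := by
    rw [Finset.mul_sum, ← Finset.sum_add_distrib]
    exact Finset.sum_congr rfl fun j _ => Nat.div_add_mod _ _
  have hA : ∑ j ∈ Finset.range m, (r + j * c) = m * r + (∑ j ∈ Finset.range m, j) * c := by
    rw [Finset.sum_add_distrib, Finset.sum_const, Finset.card_range, ← Finset.sum_mul, smul_eq_mul]
  have hT : (∑ i ∈ Finset.range m, i) * 2 = m * (m - 1) := Finset.sum_range_id_mul_two m
  obtain ⟨m', rfl⟩ : ∃ m', m = m' + 1 := ⟨m - 1, by omega⟩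
  obtain ⟨c', rfl⟩ : ∃ c', c = c' + 1 := ⟨c - 1, by omega⟩
  set S := ∑ j ∈ Finset.range (m' + 1), (r + j * c') / (m' + 1) with hS
  set T := ∑ i ∈ Finset.range (m' + 1), i with hTdef
  rw [hsum_mod, hA] at H
  simp only [Nat.add_sub_cancel] at hT ⊢
  -- H : (m'+1) * S' + T = (m'+1) * r + T * (c'+1), hT : T * 2 = (m'+1) * m'
  apply Nat.eq_of_mul_eq_mul_left (show 0 < m' + 1 by omega)
  zify at H hT ⊢
  linear_combination 2 * H + c' * hT
end

section
/- Let a, b, c be pairwise coprime positive integers and let T(x) denote the number of triples (x_1, x_2, x_3) ∈ ℕ³ with x_1·a + x_2·b + x_3·c = x. Then there exist real constants K and L (depending only on a, b, c) such that for all natural numbers x, |T(x) − (abc/2)·⌊x/(abc)⌋²| ≤ K·x + L. -/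
/-!
Slicing by the last coordinate gives `T x = ∑_{k ≤ x/c} N (x - k c)`, where `N m` counts
the solutions of `i a + j b = m`. As `a` is invertible mod `b`, the admissible `i ≤ m / a` form
a single residue class mod `b`, so `N m` is within `1` of `m / (a b)`. Hence `T x` is within
`x / c + 1` of the Riemann sum `∑_{k ≤ x/c} (x - k c) / (a b)`, which is within `x` of
`x² / (2abc)`; and `x² / (2abc)` is within `x` of `(abc/2)·⌊x/(abc)⌋²`.
-/

open Finset

theorem Set.Finite.ncard_eq_sum_ncard_fiber {α β : Type*} [DecidableEq β] {s : Set α}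
    (hs : s.Finite) {f : α → β} {t : Finset β} (hf : Set.MapsTo f s t) :
    s.ncard = ∑ y ∈ t, {x ∈ s | f x = y}.ncard := by
  obtain ⟨s, rfl⟩ := hs.exists_finset_coe
  rw [Set.ncard_coe_finset, card_eq_sum_card_fiberwise hf]
  refine sum_congr rfl fun y _ => ?_
  rw [← Set.ncard_coe_finset, coe_filter]
  rfl

theorem Nat.div_le_count_succ_modEq (n r v : ℕ) :
    n / r ≤ (n + 1).count (· ≡ v [MOD r]) := by
  calc n / r ≤ n.count (· ≡ v [MOD r]) := by
        rcases r.eq_zero_or_pos with rfl | hr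
        · simp
        · rw [Nat.count_modEq_card _ hr]; exact Nat.le_add_right _ _
    _ ≤ (n + 1).count (· ≡ v [MOD r]) := Nat.count_monotone _ n.le_succ

theorem Nat.count_succ_modEq_le {r : ℕ} (hr : 0 < r) (n v : ℕ) :
    (n + 1).count (· ≡ v [MOD r]) ≤ n / r + 1 := by
  rw [Nat.count_modEq_card _ hr, Nat.succ_div]
  by_cases hdvd : r ∣ n + 1
  · simp [hdvd, Nat.mod_eq_zero_of_dvd hdvd]
  · simp only [hdvd, if_false]; split_ifs <;> omega

theorem abs_natCast_sub_div_le_one {k m n : ℕ} (h₁ : m / n ≤ k) (h₂ : k ≤ m / n + 1) :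
    |(k : ℝ) - m / n| ≤ 1 := by
  have hfloor : ((m / n : ℕ) : ℝ) ≤ m / n := Nat.cast_div_le
  have hceil : (m : ℝ) / n < (m / n : ℕ) + 1 := by
    rw [← Nat.floor_div_eq_div (K := ℝ)]; exact Nat.lt_floor_add_one _
  have hk₁ : ((m / n : ℕ) : ℝ) ≤ k := by exact_mod_cast h₁
  have hk₂ : (k : ℝ) ≤ (m / n : ℕ) + 1 := by exact_mod_cast h₂
  rw [abs_le]; constructor <;> linarith

theorem sq_div_sub_mul_sq_div_mem_Icc {n : ℕ} (hn : 0 < n) (x : ℕ) :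
    (x : ℝ) ^ 2 / (2 * n) - n / 2 * ((x / n : ℕ) : ℝ) ^ 2 ∈ Set.Icc 0 (x : ℝ) := by
  have hx : (x : ℝ) = n * ((x / n : ℕ) : ℝ) + ((x % n : ℕ) : ℝ) := by
    exact_mod_cast (Nat.div_add_mod x n).symm
  have hr : ((x % n : ℕ) : ℝ) < n := by exact_mod_cast Nat.mod_lt x hn
  set q : ℝ := ((x / n : ℕ) : ℝ)
  set r : ℝ := ((x % n : ℕ) : ℝ)
  have hn' : (0 : ℝ) < n := by exact_mod_cast hn
  have hq : 0 ≤ q := Nat.cast_nonneg _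
  have hr0 : 0 ≤ r := Nat.cast_nonneg _
  have hexpand : (x : ℝ) ^ 2 / (2 * n) - n / 2 * q ^ 2 = q * r + r ^ 2 / (2 * n) := by
    rw [hx]; field_simp; ring
  have hrr : r ^ 2 / (2 * n) ≤ r := by
    rw [div_le_iff₀ (by positivity)]; nlinarith
  rw [hexpand, Set.mem_Icc]
  refine ⟨by positivity, ?_⟩
  rw [hx]; nlinarith

theorem sum_range_sub_mul_sub_sq_div_mem_Icc {c : ℕ} (hc : 0 < c) (x : ℕ) :
    ∑ k ∈ range (x / c + 1), ((x : ℝ) - k * c) - x ^ 2 / (2 * c) ∈ Set.Icc 0 (x : ℝ) := by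
  have hsum (q : ℕ) :
      ∑ k ∈ range (q + 1), ((x : ℝ) - k * c) = (q + 1) * x - c * (q * (q + 1) / 2) := by
    induction q with
    | zero => simp
    | succ q ih => rw [sum_range_succ, ih]; push_cast; ring
  rw [hsum]
  have hx : (x : ℝ) = c * ((x / c : ℕ) : ℝ) + ((x % c : ℕ) : ℝ) := by
    exact_mod_cast (Nat.div_add_mod x c).symm
  have hr : ((x % c : ℕ) : ℝ) < c := by exact_mod_cast Nat.mod_lt x hc
  set q : ℝ := ((x / c : ℕ) : ℝ)
  set r : ℝ := ((x % c : ℕ) : ℝ)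
  have hc' : (0 : ℝ) < c := by exact_mod_cast hc
  have hq : 0 ≤ q := Nat.cast_nonneg _
  have hr0 : 0 ≤ r := Nat.cast_nonneg _
  have hexpand : (q + 1) * x - c * (q * (q + 1) / 2) - x ^ 2 / (2 * c) =
      c * q / 2 + (r - r ^ 2 / (2 * c)) := by
    rw [hx]; field_simp; ring
  have hrr : r ^ 2 / (2 * c) ≤ r := by
    rw [div_le_iff₀ (by positivity)]; nlinarith
  rw [hexpand, Set.mem_Icc]
  constructor
  · have : 0 ≤ c * q := by positivity
    linarith
  · have : 0 ≤ r ^ 2 / (2 * c) := by positivity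
    rw [hx]; nlinarith

noncomputable def denumerant₂ (a b m : ℕ) : ℕ :=
  {p : ℕ × ℕ | p.1 * a + p.2 * b = m}.ncard

theorem denumerant₂_eq_count {a b : ℕ} (ha : 0 < a) (hb : 0 < b) (hab : a.Coprime b)
    (m : ℕ) :
    ∃ u, denumerant₂ a b m = (m / a + 1).count (· ≡ u [MOD b]) := by
  obtain ⟨u, -, hu⟩ := Nat.exists_mul_mod_eq_of_coprime m hab hb.ne'
  have hua : u * a ≡ m [MOD b] := by rw [mul_comm]; exact hu
  have hsol : ∀ i, (∃ j, i * a + j * b = m) ↔ i < m / a + 1 ∧ i ≡ u [MOD b] := by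
    intro i
    rw [Nat.lt_succ_iff, Nat.le_div_iff_mul_le ha]
    constructor
    · rintro ⟨j, rfl⟩
      refine ⟨Nat.le_add_right _ _, Nat.ModEq.cancel_right_of_coprime (c := a) ?_ ?_⟩
      · exact Nat.coprime_comm.mp hab
      · exact (Nat.add_mul_mod_self_right _ _ _).symm.trans hua.symm
    · rintro ⟨hle, hiu⟩
      obtain ⟨j, hj⟩ := (Nat.modEq_iff_dvd' hle).mp ((hiu.mul_right a).trans hua)
      exact ⟨j, by rw [mul_comm j]; omega⟩
  refine ⟨u, ?_⟩
  have hinj : Set.InjOn Prod.fst {p : ℕ × ℕ | p.1 * a + p.2 * b = m} := by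
    rintro ⟨i, j⟩ (hij : i * a + j * b = m) ⟨i', j'⟩ (hij' : i' * a + j' * b = m)
      (rfl : i = i')
    simp only [Prod.mk.injEq, true_and]
    exact Nat.eq_of_mul_eq_mul_right hb (by omega)
  rw [denumerant₂, ← hinj.ncard_image, Nat.count_eq_card_filter_range, ← Set.ncard_coe_finset]
  congr 1
  ext i
  simpa using hsol i

theorem abs_denumerant₂_sub_div_le_one {a b : ℕ} (ha : 0 < a) (hb : 0 < b) (hab : a.Coprime b)
    (m : ℕ) : |(denumerant₂ a b m : ℝ) - m / (a * b)| ≤ 1 := by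
  obtain ⟨u, hu⟩ := denumerant₂_eq_count ha hb hab m
  have h := abs_natCast_sub_div_le_one (k := denumerant₂ a b m) (m := m) (n := a * b)
    (by rw [hu, ← Nat.div_div_eq_div_mul]; exact Nat.div_le_count_succ_modEq _ _ _)
    (by rw [hu, ← Nat.div_div_eq_div_mul]; exact Nat.count_succ_modEq_le hb _ _)
  exact_mod_cast h

noncomputable def denumerant₃ (a b c x : ℕ) : ℕ :=
  {p : ℕ × ℕ × ℕ | p.1 * a + p.2.1 * b + p.2.2 * c = x}.ncard

theorem denumerant₃_eq_sum {a b c : ℕ} (ha : 0 < a) (hb : 0 < b) (hc : 0 < c) (x : ℕ) :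
    denumerant₃ a b c x = ∑ k ∈ range (x / c + 1), denumerant₂ a b (x - k * c) := by
  set S := {p : ℕ × ℕ × ℕ | p.1 * a + p.2.1 * b + p.2.2 * c = x}
  have hfin : S.Finite := by
    refine ((Set.finite_Iic x).prod ((Set.finite_Iic x).prod (Set.finite_Iic x))).subset ?_
    rintro ⟨i, j, k⟩ (h : i * a + j * b + k * c = x)
    simp only [Set.mem_prod, Set.mem_Iic]
    refine ⟨?_, ?_, ?_⟩ <;> nlinarith
  have hmaps : Set.MapsTo (fun p : ℕ × ℕ × ℕ => p.2.2) S (range (x / c + 1)) := by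
    rintro ⟨i, j, k⟩ (h : i * a + j * b + k * c = x)
    simp only [coe_range, Set.mem_Iio, Nat.lt_succ_iff, Nat.le_div_iff_mul_le hc]
    omega
  rw [denumerant₃, hfin.ncard_eq_sum_ncard_fiber hmaps]
  refine sum_congr rfl fun k hk => ?_
  have hkc : k * c ≤ x := by
    rw [mem_range, Nat.lt_succ_iff, Nat.le_div_iff_mul_le hc] at hk; exact hk
  have hfiber : {p ∈ S | p.2.2 = k} =
      (fun q : ℕ × ℕ => (q.1, q.2, k)) '' {q | q.1 * a + q.2 * b = x - k * c} := by
    ext ⟨i, j, l⟩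
    simp only [S, Set.mem_ofPred_eq, Set.mem_image, Prod.exists, Prod.mk.injEq]
    constructor
    · rintro ⟨h, rfl⟩; exact ⟨i, j, by omega, rfl, rfl, rfl⟩
    · rintro ⟨i, j, h, rfl, rfl, rfl⟩; omega
  rw [hfiber, Set.ncard_image_of_injective _ fun q q' h => by simpa [Prod.ext_iff] using h]
  rfl

theorem abs_denumerant₃_sub_sum_le {a b c : ℕ} (ha : 0 < a) (hb : 0 < b) (hc : 0 < c)
    (hab : a.Coprime b) (x : ℕ) :
    |(denumerant₃ a b c x : ℝ) - ∑ k ∈ range (x / c + 1), ((x : ℝ) - k * c) / (a * b)|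
      ≤ (x / c : ℕ) + 1 := by
  rw [denumerant₃_eq_sum ha hb hc, Nat.cast_sum, ← sum_sub_distrib]
  calc _ ≤ ∑ k ∈ range (x / c + 1),
        |(denumerant₂ a b (x - k * c) : ℝ) - ((x : ℝ) - k * c) / (a * b)| :=
        abs_sum_le_sum_abs _ _
    _ ≤ ∑ k ∈ range (x / c + 1), (1 : ℝ) := by
        refine sum_le_sum fun k hk => ?_
        have hkc : k * c ≤ x := by
          rw [mem_range, Nat.lt_succ_iff, Nat.le_div_iff_mul_le hc] at hk; exact hk
        have h := abs_denumerant₂_sub_div_le_one ha hb hab (x - k * c)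
        rwa [Nat.cast_sub hkc, Nat.cast_mul] at h
    _ = (x / c : ℕ) + 1 := by simp

theorem denumerant_three_gens_main_term_general (a b c : ℕ) (ha : 0 < a) (hb : 0 < b) (hc : 0 < c)
    (hab : Nat.Coprime a b)
    (T : ℕ → ℕ)
    (hT : ∀ x, T x = {p : ℕ × ℕ × ℕ | p.1 * a + p.2.1 * b + p.2.2 * c = x}.ncard) :
    ∃ K L : ℝ, ∀ x : ℕ,
      |(T x : ℝ) - (a * b * c : ℝ) / 2 * (x / (a * b * c) : ℕ) ^ 2| ≤ K * x + L := by
  refine ⟨3, 1, fun x => ?_⟩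
  have hcount := abs_denumerant₃_sub_sum_le ha hb hc hab x
  have hsum := sum_range_sub_mul_sub_sq_div_mem_Icc hc x
  have hmain := sq_div_sub_mul_sq_div_mem_Icc (n := a * b * c) (by positivity) x
  push_cast at hmain
  have hq : ((x / c : ℕ) : ℝ) ≤ x := by exact_mod_cast Nat.div_le_self x c
  have hab1 : (1 : ℝ) ≤ a * b := by exact_mod_cast Nat.one_le_iff_ne_zero.mpr (by positivity)
  set D := ∑ k ∈ range (x / c + 1), ((x : ℝ) - k * c) - x ^ 2 / (2 * c) with hD_def
  have hrescale : ∑ k ∈ range (x / c + 1), ((x : ℝ) - k * c) / (a * b)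
      - x ^ 2 / (2 * (a * b * c)) = D / (a * b) := by
    rw [hD_def, ← sum_div, sub_div, div_div]
    ring
  have hD : D / (a * b) ∈ Set.Icc 0 (x : ℝ) :=
    ⟨div_nonneg hsum.1 (by positivity), (div_le_self hsum.1 hab1).trans hsum.2⟩
  rw [hT x, ← denumerant₃]
  rw [abs_le] at hcount ⊢
  constructor <;> linarith [hD.1, hD.2, hmain.1, hmain.2]

/-- For pairwise coprime positive integers `a, b, c`, the denumerant `T` of `⟨a,b,c⟩`
satisfies `|T x - (abc/2)·⌊x/(abc)⌋²| ≤ K·x + L` for some real constants `K, L`. -/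
theorem denumerant_three_gens_main_term (a b c : ℕ) (ha : 0 < a) (hb : 0 < b) (hc : 0 < c)
    (hab : Nat.Coprime a b) (hac : Nat.Coprime a c) (hbc : Nat.Coprime b c)
    (T : ℕ → ℕ)
    (hT : ∀ x, T x = {p : ℕ × ℕ × ℕ | p.1 * a + p.2.1 * b + p.2.2 * c = x}.ncard) :
    ∃ K L : ℝ, ∀ x : ℕ,
      |(T x : ℝ) - (a * b * c : ℝ) / 2 * (x / (a * b * c) : ℕ) ^ 2| ≤ K * x + L :=
  denumerant_three_gens_main_term_general a b c ha hb hc hab T hT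
end

section
/- Let a, b, c be pairwise coprime positive integers and let T(x) denote the number of triples (x_1, x_2, x_3) ∈ ℕ³ with x_1·a + x_2·b + x_3·c = x. Then T(x)/x² tends to 1/(2abc) as x → ∞ over the natural numbers. -/
/-!
For a fixed number `k` of copies of `c`, the solutions of `u * a + v * b = x - k * c` are
determined by `u`, which runs over one residue class modulo `b` in `[0, (x - k * c) / a]`
because `a` and `b` are coprime; so there are `(x - k * c) / (a * b) + O(1)` of them.
Summing over `0 ≤ k ≤ x / c` gives `T x = x ^ 2 / (2 * a * b * c) + O(x)`.
-/

open Filter Finset Topology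

theorem Nat.div_lt_cast_div_add_one {K : Type*} [Semifield K] [LinearOrder K]
    [IsStrictOrderedRing K] [FloorSemiring K] (n r : ℕ) : (n : K) / r < (n / r : ℕ) + 1 := by
  rw [← Nat.floor_div_eq_div (K := K)]
  exact Nat.lt_floor_add_one _

theorem Nat.abs_count_modEq_sub_div_le_one {r : ℕ} (hr : 0 < r) (n v : ℕ) :
    |(n.count (· ≡ v [MOD r]) : ℝ) - n / r| ≤ 1 := by
  have hlt : (n : ℝ) / r < (n / r : ℕ) + 1 := Nat.div_lt_cast_div_add_one n r
  have hle : ((n / r : ℕ) : ℝ) ≤ n / r := Nat.cast_div_le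
  rw [Nat.count_modEq_card n hr, abs_le]
  split_ifs <;> push_cast <;> constructor <;> linarith

theorem Nat.exists_mul_modEq_iff_modEq {a b : ℕ} [NeZero b] (hab : a.Coprime b) (y : ℕ) :
    ∃ v, ∀ u, u * a ≡ y [MOD b] ↔ u ≡ v [MOD b] := by
  refine ⟨((y : ZMod b) * ↑(ZMod.unitOfCoprime a hab)⁻¹).val, fun u => ?_⟩
  rw [← ZMod.natCast_eq_natCast_iff, ← ZMod.natCast_eq_natCast_iff, ZMod.natCast_zmod_val,
    Units.eq_mul_inv_iff_mul_eq, Nat.cast_mul, ZMod.coe_unitOfCoprime]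

theorem ncard_add_mul_eq_count {a b : ℕ} (ha : 0 < a) (hb : 0 < b) (y : ℕ) :
    {p : ℕ × ℕ | p.1 * a + p.2 * b = y}.ncard
      = (y / a + 1).count (fun u => u * a ≡ y [MOD b]) := by
  have hinj : Set.InjOn Prod.fst {p : ℕ × ℕ | p.1 * a + p.2 * b = y} := by
    rintro ⟨u, v⟩ h ⟨u', v'⟩ h' rfl
    simp only [Set.mem_ofPred_eq] at h h'
    simp only [Prod.mk.injEq, true_and]
    exact Nat.eq_of_mul_eq_mul_right hb (by omega)
  have himage : Prod.fst '' {p : ℕ × ℕ | p.1 * a + p.2 * b = y}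
      = ↑{u ∈ range (y / a + 1) | u * a ≡ y [MOD b]} := by
    ext u
    simp only [Set.mem_image, Set.mem_ofPred_eq, Prod.exists, exists_and_right, exists_eq_right,
      coe_filter, mem_range, Nat.lt_succ_iff, Nat.le_div_iff_mul_le ha]
    constructor
    · rintro ⟨v, hv⟩
      exact ⟨by omega, (Nat.modEq_iff_dvd' (by omega)).2 ⟨v, by rw [mul_comm b]; omega⟩⟩
    · rintro ⟨hle, hmod⟩
      obtain ⟨v, hv⟩ := (Nat.modEq_iff_dvd' hle).1 hmod
      exact ⟨v, by rw [mul_comm v]; omega⟩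
  rw [← hinj.ncard_image, himage, Set.ncard_coe_finset, Nat.count_eq_card_filter_range]

theorem abs_ncard_add_mul_sub_div_le_two {a b : ℕ} (ha : 0 < a) (hb : 0 < b)
    (hab : a.Coprime b) (y : ℕ) :
    |({p : ℕ × ℕ | p.1 * a + p.2 * b = y}.ncard : ℝ) - y / (a * b)| ≤ 2 := by
  have : NeZero b := NeZero.of_pos hb
  obtain ⟨v, hv⟩ := Nat.exists_mul_modEq_iff_modEq hab y
  have hcount := Nat.abs_count_modEq_sub_div_le_one hb (y / a + 1) v
  simp only [ncard_add_mul_eq_count ha hb, hv]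
  have hlt : (y : ℝ) / a < (y / a : ℕ) + 1 := Nat.div_lt_cast_div_add_one y a
  have hle : ((y / a : ℕ) : ℝ) ≤ y / a := Nat.cast_div_le
  have hb' : (1 : ℝ) ≤ b := by exact_mod_cast hb
  have : |((y / a + 1 : ℕ) : ℝ) / b - y / (a * b)| ≤ 1 := by
    rw [← div_div, ← sub_div, abs_div, abs_of_pos (by positivity : (0 : ℝ) < b),
      div_le_one (by positivity), abs_le]
    push_cast
    constructor <;> linarith
  calc _ ≤ _ := abs_sub_le _ (((y / a + 1 : ℕ) : ℝ) / b) _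
    _ ≤ 2 := by linarith

theorem ncard_add_mul_add_mul_eq_sum {a b c : ℕ} (ha : 0 < a) (hb : 0 < b) (hc : 0 < c)
    (x : ℕ) :
    {p : ℕ × ℕ × ℕ | p.1 * a + p.2.1 * b + p.2.2 * c = x}.ncard
      = ∑ k ∈ range (x / c + 1), {q : ℕ × ℕ | q.1 * a + q.2 * b = x - k * c}.ncard := by
  have hfinite (y : ℕ) : {q : ℕ × ℕ | q.1 * a + q.2 * b = y}.Finite := by
    refine ((Set.finite_Iic y).prod (Set.finite_Iic y)).subset fun q hq => ?_
    have := Nat.le_mul_of_pos_right q.1 ha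
    have := Nat.le_mul_of_pos_right q.2 hb
    simp only [Set.mem_ofPred_eq] at hq
    exact ⟨Set.mem_Iic.2 (by omega), Set.mem_Iic.2 (by omega)⟩
  let embed (k : ℕ) (q : ℕ × ℕ) : ℕ × ℕ × ℕ := (q.1, q.2, k)
  have hembed (k : ℕ) : Function.Injective (embed k) := fun q q' h => by
    simp only [embed, Prod.mk.injEq] at h
    exact Prod.ext h.1 h.2.1
  have hdisjoint : (range (x / c + 1) : Set ℕ).PairwiseDisjoint
      fun k => embed k '' {q : ℕ × ℕ | q.1 * a + q.2 * b = x - k * c} := by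
    intro k _ l _ hkl
    refine Set.disjoint_left.2 ?_
    rintro _ ⟨q, -, rfl⟩ ⟨q', -, h⟩
    exact hkl (congrArg (·.2.2) h).symm
  have hunion : {p : ℕ × ℕ × ℕ | p.1 * a + p.2.1 * b + p.2.2 * c = x}
      = ⋃ k ∈ (range (x / c + 1) : Set ℕ),
          embed k '' {q : ℕ × ℕ | q.1 * a + q.2 * b = x - k * c} := by
    ext ⟨u, v, w⟩
    simp only [Set.mem_ofPred_eq, Set.mem_iUnion, Set.mem_image, coe_range, Set.mem_Iio,
      Nat.lt_succ_iff, Nat.le_div_iff_mul_le hc, embed, Prod.mk.injEq, Prod.exists]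
    constructor
    · rintro h
      exact ⟨w, by omega, u, v, by omega, rfl, rfl, rfl⟩
    · rintro ⟨k, hk, u, v, h, rfl, rfl, rfl⟩
      omega
  rw [hunion, (finite_toSet _).ncard_biUnion (fun k _ => (hfinite _).image _) hdisjoint,
    finsum_mem_coe_finset]
  exact sum_congr rfl fun k _ => Set.ncard_image_of_injective _ (hembed k)

theorem two_mul_sum_range_sub_mul {R : Type*} [CommRing R] (x c : R) (n : ℕ) :
    2 * ∑ k ∈ range n, (x - k * c) = n * (2 * x - (n - 1) * c) := by
  induction n with
  | zero => simp
  | succ n ih => rw [sum_range_succ, mul_add, ih]; push_cast; ring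

theorem abs_sum_range_sub_mul_sub_sq_div_le {x c : ℝ} {m : ℕ} (hc : 0 < c)
    (hm : c * m ≤ x) (hm' : x < c * (m + 1)) :
    |∑ k ∈ range (m + 1), (x - k * c) - x ^ 2 / (2 * c)| ≤ (x + c) / 2 := by
  have hsum := two_mul_sum_range_sub_mul x c (m + 1)
  set S := ∑ k ∈ range (m + 1), (x - k * c)
  rw [show S - x ^ 2 / (2 * c) = (c * (2 * S) - x ^ 2) / (2 * c) by field_simp, hsum, abs_div,
    abs_of_pos (show 0 < 2 * c by positivity), div_le_iff₀ (by positivity), abs_le]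
  push_cast
  have hx : 0 ≤ x := le_trans (by positivity) hm
  -- with `t = c * m`, the numerator is `c * (2 * x - t) - (x - t) ^ 2` and `0 ≤ x - t < c`
  have hgap := mul_nonneg (sub_nonneg.2 hm) (sub_nonneg.2 hm'.le)
  constructor
  · nlinarith [mul_nonneg hc.le hx]
  · nlinarith [mul_pos hc (sub_pos.2 hm'), sq_nonneg (x - c * m)]

theorem tendsto_div_sq_of_abs_sub_mul_sq_le {f : ℕ → ℝ} {L C : ℝ}
    (h : ∀ x : ℕ, |f x - L * x ^ 2| ≤ C * (x + 1)) :
    Tendsto (fun x : ℕ => f x / x ^ 2) atTop (𝓝 L) := by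
  have hinv : Tendsto (fun x : ℕ => (x : ℝ)⁻¹) atTop (𝓝 0) := tendsto_inv_atTop_nhds_zero_nat
  have hbound : Tendsto (fun x : ℕ => C * ((x : ℝ)⁻¹ + (x : ℝ)⁻¹ ^ 2)) atTop (𝓝 0) := by
    simpa using (hinv.add (hinv.pow 2)).const_mul C
  rw [tendsto_iff_norm_sub_tendsto_zero]
  refine squeeze_zero' (Eventually.of_forall fun _ => norm_nonneg _) ?_ hbound
  filter_upwards [eventually_ne_atTop 0] with x hx
  have hx' : (0 : ℝ) < x ^ 2 := by positivity
  calc ‖f x / x ^ 2 - L‖ = |f x - L * x ^ 2| / x ^ 2 := by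
        rw [Real.norm_eq_abs, ← abs_of_pos hx', ← abs_div, abs_of_pos hx', sub_div,
          mul_div_cancel_right₀ _ hx'.ne']
    _ ≤ C * (x + 1) / x ^ 2 := by gcongr; exact h x
    _ = C * ((x : ℝ)⁻¹ + (x : ℝ)⁻¹ ^ 2) := by field_simp

theorem abs_ncard_add_mul_add_mul_sub_le {a b c : ℕ} (ha : 0 < a) (hb : 0 < b) (hc : 0 < c)
    (hab : a.Coprime b) (x : ℕ) :
    |({p : ℕ × ℕ × ℕ | p.1 * a + p.2.1 * b + p.2.2 * c = x}.ncard : ℝ)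
        - 1 / (2 * a * b * c) * x ^ 2| ≤ ((c : ℝ) + 2) * (x + 1) := by
  set m := x / c
  have hc' : (1 : ℝ) ≤ c := by exact_mod_cast hc
  have hab' : (1 : ℝ) ≤ a * b := by exact_mod_cast Nat.mul_pos ha hb
  have hab₀ : (0 : ℝ) < a * b := by linarith
  have hm : (c : ℝ) * m ≤ x := by
    rw [← le_div_iff₀' (by positivity)]; exact Nat.cast_div_le
  have hm' : (x : ℝ) < c * (m + 1) := by
    rw [← div_lt_iff₀' (by positivity)]; exact Nat.div_lt_cast_div_add_one x c
  have hcast (k : ℕ) (hk : k ∈ range (m + 1)) : ((x - k * c : ℕ) : ℝ) = x - k * c := by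
    rw [mem_range, Nat.lt_succ_iff, Nat.le_div_iff_mul_le hc] at hk
    rw [Nat.cast_sub hk, Nat.cast_mul]
  have hfibres : |({p : ℕ × ℕ × ℕ | p.1 * a + p.2.1 * b + p.2.2 * c = x}.ncard : ℝ)
      - ∑ k ∈ range (m + 1), ((x : ℝ) - k * c) / (a * b)| ≤ 2 * (m + 1) := by
    rw [ncard_add_mul_add_mul_eq_sum ha hb hc, Nat.cast_sum, ← sum_sub_distrib]
    calc _ ≤ ∑ k ∈ range (m + 1), (2 : ℝ) := by
          refine (abs_sum_le_sum_abs _ _).trans (sum_le_sum fun k hk => ?_)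
          rw [← hcast k hk]
          exact abs_ncard_add_mul_sub_div_le_two ha hb hab _
      _ = 2 * (m + 1) := by simp [mul_comm]
  have hsum : |∑ k ∈ range (m + 1), ((x : ℝ) - k * c) / (a * b) - 1 / (2 * a * b * c) * x ^ 2|
      ≤ ((x : ℝ) + c) / 2 := by
    rw [← sum_div, show 1 / (2 * a * b * c) * (x : ℝ) ^ 2 = x ^ 2 / (2 * c) / (a * b) by
      field_simp, ← sub_div, abs_div, abs_of_pos hab₀, div_le_iff₀ hab₀]
    exact (abs_sum_range_sub_mul_sub_sq_div_le (by positivity) hm hm').trans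
      (le_mul_of_one_le_right (by positivity) hab')
  have hmx : (m : ℝ) ≤ x := by nlinarith
  calc _ ≤ 2 * ((m : ℝ) + 1) + (x + c) / 2 := (abs_sub_le _ _ _).trans (add_le_add hfibres hsum)
    _ ≤ (c + 2) * (x + 1) := by nlinarith

theorem denumerant_three_gens_asymptotic_general (a b c : ℕ) (ha : 0 < a) (hb : 0 < b) (hc : 0 < c)
    (hab : Nat.Coprime a b)
    (T : ℕ → ℕ)
    (hT : ∀ x, T x = {p : ℕ × ℕ × ℕ | p.1 * a + p.2.1 * b + p.2.2 * c = x}.ncard) :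
    Tendsto (fun x : ℕ => (T x : ℝ) / (x : ℝ) ^ 2) atTop (nhds (1 / (2 * a * b * c))) := by
  simp only [hT]
  exact tendsto_div_sq_of_abs_sub_mul_sq_le (abs_ncard_add_mul_add_mul_sub_le ha hb hc hab)

/-- For pairwise coprime positive integers `a, b, c`, the denumerant `T` of `⟨a,b,c⟩`
satisfies `T x / x² → 1/(2abc)` as `x → ∞`. -/
theorem denumerant_three_gens_asymptotic (a b c : ℕ) (ha : 0 < a) (hb : 0 < b) (hc : 0 < c)
    (hab : Nat.Coprime a b) (hac : Nat.Coprime a c) (hbc : Nat.Coprime b c)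
    (T : ℕ → ℕ)
    (hT : ∀ x, T x = {p : ℕ × ℕ × ℕ | p.1 * a + p.2.1 * b + p.2.2 * c = x}.ncard) :
    Tendsto (fun x : ℕ => (T x : ℝ) / (x : ℝ) ^ 2) atTop (nhds (1 / (2 * a * b * c))) :=
  denumerant_three_gens_asymptotic_general a b c ha hb hc hab T hT
end

section
/- Let d ≥ 2 and let a_1, …, a_d be positive integers with gcd(a_i, a_j) = 1 for all i ≠ j. Let T(x) denote the number of tuples (x_1, …, x_d) ∈ ℕ^d with x_1·a_1 + … + x_d·a_d = x, and set P = a_1·a_2·⋯·a_d. Then there exists a real constant C (depending only on a_1, …, a_d) such that for all natural numbers x, |T(x) − (P^{d-2}/(d−1)!)·⌊x/P⌋^{d-1}| ≤ C·(x + 1)^{d-2}. -/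
/-!
Put `b i = P / a i`. Every `f` splits uniquely as `f i = y i + b i * c i` with
`y i < b i`, and then `∑ f i * a i = ∑ y i * a i + P * ∑ c i`. So for `x ≥ d * P` the solutions
are counted by the residue vectors `y` in the box `∏ [0, b i)` with `∑ y i * a i ≡ x [MOD P]`,
each contributing the number `C(m + d - 1, d - 1)` of compositions into `d` parts of
`m = (x - ∑ y i * a i) / P`, where `x / P - d ≤ m ≤ x / P`.
Since two of the `a i` are coprime, `y ↦ ∑ y i * a i` is a surjective homomorphism
`∏ ℤ/(b i) → ℤ/P`, so exactly `P ^ (d - 1) / P = P ^ (d - 2)` residue vectors occur, and each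
binomial coefficient is `(x / P) ^ (d - 1) / (d - 1)! + O((x + 1) ^ (d - 2))`.
Finitely many small `x` are absorbed into the constant.
-/

open Finset Filter

theorem AddMonoidHom.card_fiber_mul_card_eq {G H : Type*} [AddGroup G] [Fintype G] [AddMonoid H]
    [Fintype H] [DecidableEq H] (φ : G →+ H) (hφ : Function.Surjective φ) (h : H) :
    #{g | φ g = h} * Fintype.card H = Fintype.card G := by
  calc #{g | φ g = h} * Fintype.card H = ∑ h' : H, #{g | φ g = h'} := by
        rw [sum_congr rfl fun h' _ => AddMonoidHom.card_fiber_eq_of_mem_range φ (hφ h') (hφ h),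
          sum_const, card_univ, smul_eq_mul, mul_comm]
    _ = Fintype.card G :=
        (card_eq_sum_card_fiberwise (f := φ) (t := univ) fun _ _ => mem_univ _).symm

theorem exists_forall_abs_le_mul_of_eventually_le (f g : ℕ → ℝ) (hg : ∀ x, 1 ≤ g x) (C : ℝ)
    (h : ∀ᶠ x in atTop, |f x| ≤ C * g x) : ∃ C', ∀ x, |f x| ≤ C' * g x := by
  obtain ⟨N, hN⟩ := eventually_atTop.mp h
  set S := ∑ n ∈ range N, |f n|
  refine ⟨max C 0 + S, fun x => ?_⟩
  have hS : 0 ≤ S := sum_nonneg fun _ _ => abs_nonneg _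
  rcases le_or_gt N x with hx | hx
  · calc |f x| ≤ C * g x := hN x hx
      _ ≤ (max C 0 + S) * g x := by
          gcongr
          · exact zero_le_one.trans (hg x)
          · linarith [le_max_left C 0]
  · calc |f x| ≤ S :=
          single_le_sum (f := fun n => |f n|) (fun _ _ => abs_nonneg _) (mem_range.mpr hx)
      _ ≤ max C 0 + S := le_add_of_nonneg_left (le_max_right C 0)
      _ ≤ (max C 0 + S) * g x := le_mul_of_one_le_right (by positivity) (hg x)

theorem abs_sum_sub_card_mul_le {α : Type*} (s : Finset α) (f : α → ℝ) {c E : ℝ}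
    (h : ∀ y ∈ s, |f y - c| ≤ E) : |∑ y ∈ s, f y - #s * c| ≤ #s * E := by
  calc |∑ y ∈ s, f y - #s * c| = |∑ y ∈ s, (f y - c)| := by
        rw [sum_sub_distrib, sum_const, nsmul_eq_mul]
    _ ≤ ∑ y ∈ s, |f y - c| := abs_sum_le_sum_abs _ _
    _ ≤ ∑ _y ∈ s, E := sum_le_sum h
    _ = #s * E := by rw [sum_const, nsmul_eq_mul]

theorem Nat.div_le_sub_div_add {x s P n : ℕ} (hP : 0 < P) (hs : s ≤ n * P) :
    x / P ≤ (x - s) / P + n := by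
  rw [← Nat.add_mul_div_right _ _ hP]
  exact Nat.div_le_div_right (by omega)

theorem abs_choose_sub_pow_div_factorial_le {k m q e : ℕ} (hm : m ≤ q) (hq : q ≤ m + e) :
    |((m + k).choose k : ℝ) - q ^ k / k.factorial| ≤ (e + k) * k * (q + k) ^ (k - 1) := by
  -- `k! * C(m + k, k) = (m + 1) ⋯ (m + k)` lies between `m ^ k` and `(m + k) ^ k`.
  have hlo : m ^ k ≤ k.factorial * (m + k).choose k :=
    Nat.ascFactorial_eq_factorial_mul_choose m k ▸
      (Nat.pow_le_pow_left m.le_succ k).trans (Nat.pow_succ_le_ascFactorial (m + 1) k)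
  have hhi : k.factorial * (m + k).choose k ≤ (m + k) ^ k :=
    Nat.ascFactorial_eq_factorial_mul_choose m k ▸ Nat.ascFactorial_le_pow_add m k
  have hend (n : ℕ) (hn₁ : m ≤ n) (hn₂ : n ≤ m + k) :
      |(n : ℝ) ^ k - q ^ k| ≤ (e + k) * k * (q + k) ^ (k - 1) := by
    have hnq : (n : ℝ) ≤ q + k := by exact_mod_cast (by omega : n ≤ q + k)
    have hdist : |(n : ℝ) - q| ≤ e + k := by
      rw [abs_le]
      constructor
      · have : (q : ℝ) ≤ m + e := by exact_mod_cast hq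
        have : (m : ℝ) ≤ n := by exact_mod_cast hn₁
        linarith
      · have : (n : ℝ) ≤ m + k := by exact_mod_cast hn₂
        have : (m : ℝ) ≤ q := by exact_mod_cast hm
        linarith
    calc |(n : ℝ) ^ k - q ^ k| ≤ |(n : ℝ) - q| * k * max |(n : ℝ)| |(q : ℝ)| ^ (k - 1) :=
          abs_pow_sub_pow_le _ _ _
      _ ≤ (e + k) * k * (q + k) ^ (k - 1) := by
          rw [abs_of_nonneg (Nat.cast_nonneg (α := ℝ) n),
            abs_of_nonneg (Nat.cast_nonneg (α := ℝ) q)]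
          gcongr
          exact max_le hnq (by linarith)
  have hlo' : (m : ℝ) ^ k ≤ k.factorial * (m + k).choose k := by exact_mod_cast hlo
  have hhi' : (k.factorial * (m + k).choose k : ℝ) ≤ ((m + k : ℕ) : ℝ) ^ k := by
    exact_mod_cast hhi
  have hA : |(k.factorial * (m + k).choose k : ℝ) - q ^ k| ≤ (e + k) * k * (q + k) ^ (k - 1) :=
    (abs_le_max_abs_abs (sub_le_sub_right hlo' _) (sub_le_sub_right hhi' _)).trans
      (max_le (hend m le_rfl (by omega)) (hend (m + k) (by omega) le_rfl))
  rw [show ((m + k).choose k : ℝ) - q ^ k / k.factorial =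
      (k.factorial * (m + k).choose k - q ^ k) / k.factorial by field_simp,
    abs_div, abs_of_pos (by positivity : (0 : ℝ) < k.factorial)]
  exact (div_le_self (abs_nonneg _) (by exact_mod_cast k.factorial_pos)).trans hA

theorem abs_choose_sub_pow_div_factorial_le_mul_pow {n m q x : ℕ} (hn : 2 ≤ n) (hm : m ≤ q)
    (hq : q ≤ m + n) (hqx : q ≤ x) :
    |((n + m - 1).choose m : ℝ) - q ^ (n - 1) / (n - 1).factorial| ≤
      2 * n ^ n * (x + 1) ^ (n - 2) := by
  have hn₁ : (1 : ℝ) ≤ n := by exact_mod_cast (by omega : 1 ≤ n)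
  have hk : ((n - 1 : ℕ) : ℝ) ≤ n := by exact_mod_cast n.sub_le 1
  have hqx' : (q : ℝ) ≤ x := by exact_mod_cast hqx
  rw [show n + m - 1 = m + (n - 1) by omega, Nat.choose_symm_add]
  calc _ ≤ ((n : ℝ) + (n - 1 : ℕ)) * (n - 1 : ℕ) * (q + (n - 1 : ℕ)) ^ (n - 1 - 1) :=
        abs_choose_sub_pow_div_factorial_le hm hq
    _ ≤ ((n : ℝ) + n) * n * (n * (x + 1)) ^ (n - 2) := by
        rw [Nat.sub_sub]
        gcongr
        nlinarith [x.cast_nonneg (α := ℝ)]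
    _ = 2 * n ^ n * (x + 1) ^ (n - 2) := by
        rw [mul_pow, show (n : ℝ) ^ n = n ^ (n - 2) * n * n by
          rw [← pow_succ, ← pow_succ, show n - 2 + 1 + 1 = n by omega]]
        ring

variable {ι : Type*} [Fintype ι]

section Residues

variable (a b : ι → ℕ) {P : ℕ} (hab : ∀ i, a i * b i = P)

/-- `g ↦ ∑ i, g i * a i`, well defined modulo `P` because `a i * b i = P`. -/
def weightedSumMod : (∀ i, ZMod (b i)) →+ ZMod P :=
  ∑ i, (ZMod.lift (b i) ⟨zmultiplesHom (ZMod P) (a i : ZMod P), by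
    simp [← Nat.cast_mul, mul_comm, hab i]⟩).comp (Pi.evalAddMonoidHom _ i)

theorem weightedSumMod_intCast (y : ι → ℤ) :
    weightedSumMod a b hab (fun i => y i) = ((∑ i, y i * a i : ℤ) : ZMod P) := by
  simp only [weightedSumMod, AddMonoidHom.finsetSum_apply, AddMonoidHom.comp_apply,
    Pi.evalAddMonoidHom_apply, Int.cast_sum, Int.cast_mul, Int.cast_natCast, ZMod.lift_coe]
  simp

theorem weightedSumMod_natCast (y : ι → ℕ) :
    weightedSumMod a b hab (fun i => y i) = ((∑ i, y i * a i : ℕ) : ZMod P) := by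
  simpa using weightedSumMod_intCast a b hab (fun i => y i)

theorem weightedSumMod_surjective {i j : ι} (hij : (a i).Coprime (a j)) :
    Function.Surjective (weightedSumMod a b hab) := by
  classical
  obtain ⟨g, hg⟩ : ∃ g, weightedSumMod a b hab g = 1 := by
    have hbezout : (Nat.gcdA (a i) (a j) * a i + Nat.gcdB (a i) (a j) * a j : ℤ) = 1 := by
      have := Nat.gcd_eq_gcd_ab (a i) (a j)
      rw [hij] at this
      push_cast at this
      linarith
    refine ⟨fun k => ((Pi.single i (Nat.gcdA (a i) (a j)) + Pi.single j (Nat.gcdB (a i) (a j)) :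
      ι → ℤ) k : ZMod (b k)), ?_⟩
    rw [weightedSumMod_intCast]
    simp only [Pi.add_apply, add_mul, sum_add_distrib, Pi.single_apply, ite_mul, zero_mul,
      sum_ite_eq', mem_univ, if_true]
    exact_mod_cast congrArg (Int.cast : ℤ → ZMod P) hbezout
  intro t
  obtain ⟨z, rfl⟩ := ZMod.intCast_surjective t
  exact ⟨z • g, by rw [map_zsmul, hg, zsmul_eq_mul, mul_one]⟩

end Residues

theorem card_filter_sum_mul_modEq_mul [DecidableEq ι] (a b : ι → ℕ) {P : ℕ}
    (hab : ∀ i, a i * b i = P) (hP : 0 < P) {i j : ι} (hij : (a i).Coprime (a j)) (r : ℕ) :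
    #{y ∈ Fintype.piFinset fun i => range (b i) | ∑ i, y i * a i ≡ r [MOD P]} * P = ∏ i, b i := by
  have : NeZero P := ⟨hP.ne'⟩
  have (i : ι) : NeZero (b i) := ⟨(CanonicallyOrderedAdd.mul_pos.mp (hab i ▸ hP)).2.ne'⟩
  have hfiber := (weightedSumMod a b hab).card_fiber_mul_card_eq
    (weightedSumMod_surjective a b hab hij) r
  simp only [ZMod.card, Fintype.card_pi] at hfiber
  rw [← hfiber]
  congr 1
  refine card_nbij' (fun y i => y i) (fun g i => (g i).val) ?_ ?_ ?_ ?_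
  · intro y hy
    simp only [Fintype.mem_piFinset, mem_range, coe_filter, Set.mem_ofPred_eq] at hy ⊢
    rw [weightedSumMod_natCast, ZMod.natCast_eq_natCast_iff]
    exact ⟨mem_univ _, hy.2⟩
  · intro g hg
    simp only [Fintype.mem_piFinset, mem_range, coe_filter, Set.mem_ofPred_eq] at hg ⊢
    refine ⟨fun i => ZMod.val_lt _, ?_⟩
    have hval : (fun i => ((g i).val : ZMod (b i))) = g := funext fun i => ZMod.natCast_zmod_val _
    rw [← ZMod.natCast_eq_natCast_iff, ← weightedSumMod_natCast a b hab, hval]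
    exact hg.2
  · intro y hy
    simp only [Fintype.mem_piFinset, mem_range, coe_filter, Set.mem_ofPred_eq] at hy
    exact funext fun i => ZMod.val_cast_of_lt (hy.1 i)
  · intro g _
    exact funext fun i => ZMod.natCast_zmod_val _

theorem card_piAntidiag_univ [DecidableEq ι] (m : ℕ) :
    #(piAntidiag (univ : Finset ι) m) = (Fintype.card ι + m - 1).choose m := by
  rw [← map_sym_eq_piAntidiag, card_map, sym_univ, card_univ, Sym.card_sym_eq_choose]

def solutions [DecidableEq ι] (a : ι → ℕ) (x : ℕ) : Finset (ι → ℕ) :=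
  {f ∈ Fintype.piFinset fun _ => range (x + 1) | ∑ i, f i * a i = x}

theorem mem_solutions [DecidableEq ι] {a : ι → ℕ} (ha : ∀ i, 0 < a i) {x : ℕ} {f : ι → ℕ} :
    f ∈ solutions a x ↔ ∑ i, f i * a i = x := by
  simp only [solutions, mem_filter, Fintype.mem_piFinset, mem_range, and_iff_right_iff_imp]
  intro hf i
  have := (Nat.le_mul_of_pos_right (f i) (ha i)).trans
    (hf ▸ single_le_sum (f := fun j => f j * a j) (fun _ _ => Nat.zero_le _) (mem_univ i))
  omega

section Decomposition

variable {a b : ι → ℕ} {P : ℕ}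

theorem sum_mul_eq_sum_mod_mul_add (hab : ∀ i, a i * b i = P) (f : ι → ℕ) :
    ∑ i, f i * a i = ∑ i, f i % b i * a i + P * ∑ i, f i / b i := by
  rw [mul_sum, ← sum_add_distrib]
  refine sum_congr rfl fun i _ => ?_
  conv_lhs => rw [← Nat.mod_add_div (f i) (b i)]
  rw [← hab i]
  ring

theorem sum_mul_le_card_mul (hab : ∀ i, a i * b i = P) {y : ι → ℕ} (hy : ∀ i, y i < b i) :
    ∑ i, y i * a i ≤ Fintype.card ι * P := by
  calc ∑ i, y i * a i ≤ ∑ _i : ι, P :=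
        sum_le_sum fun i _ => hab i ▸ mul_comm (a i) (b i) ▸ Nat.mul_le_mul_right _ (hy i).le
    _ = Fintype.card ι * P := by rw [sum_const, card_univ, smul_eq_mul]

/-- The solutions with residues `y` are the `f i = y i + b i * c i` with `∑ i, c i = m`. -/
theorem card_filter_solutions_mod_eq [DecidableEq ι] (hab : ∀ i, a i * b i = P) (hP : 0 < P)
    {y : ι → ℕ} (hy : ∀ i, y i < b i) {m x : ℕ} (hx : ∑ i, y i * a i + P * m = x) :
    #{f ∈ solutions a x | (fun i => f i % b i) = y} = #(piAntidiag (univ : Finset ι) m) := by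
  have hpos (i : ι) : 0 < a i ∧ 0 < b i := CanonicallyOrderedAdd.mul_pos.mp (hab i ▸ hP)
  have hshift (c : ι → ℕ) : ∑ i, (y i + b i * c i) * a i = ∑ i, y i * a i + P * ∑ i, c i := by
    rw [mul_sum, ← sum_add_distrib]
    refine sum_congr rfl fun i _ => ?_
    rw [← hab i]
    ring
  refine card_nbij' (fun f i => f i / b i) (fun c i => y i + b i * c i) ?_ ?_ ?_ ?_
  · intro f hf
    simp only [coe_filter, mem_solutions (fun i => (hpos i).1), Set.mem_ofPred_eq, mem_coe,
      mem_piAntidiag, mem_univ, implies_true, and_true] at hf ⊢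
    obtain ⟨hsum, rfl⟩ := hf
    beta_reduce at hx
    have := sum_mul_eq_sum_mod_mul_add hab f
    exact Nat.eq_of_mul_eq_mul_left hP (by omega)
  · intro c hc
    simp only [coe_filter, mem_solutions (fun i => (hpos i).1), Set.mem_ofPred_eq, mem_coe,
      mem_piAntidiag, mem_univ, implies_true, and_true] at hc ⊢
    refine ⟨by rw [hshift, hc, hx], funext fun i => ?_⟩
    rw [Nat.add_mul_mod_self_left, Nat.mod_eq_of_lt (hy i)]
  · intro f hf
    simp only [coe_filter, Set.mem_ofPred_eq] at hf
    funext i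
    simp only [← congrFun hf.2 i, Nat.mod_add_div]
  · intro c _
    funext i
    simp only [Nat.add_mul_div_left _ _ (hpos i).2, Nat.div_eq_of_lt (hy i), zero_add]

theorem card_solutions_eq_sum [DecidableEq ι] (hab : ∀ i, a i * b i = P) (hP : 0 < P) {x : ℕ}
    (hx : Fintype.card ι * P ≤ x) :
    #(solutions a x) = ∑ y ∈ Fintype.piFinset (fun i => range (b i)) with
        ∑ i, y i * a i ≡ x [MOD P],
      (Fintype.card ι + (x - ∑ i, y i * a i) / P - 1).choose ((x - ∑ i, y i * a i) / P) := by
  have hpos (i : ι) : 0 < a i ∧ 0 < b i := CanonicallyOrderedAdd.mul_pos.mp (hab i ▸ hP)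
  rw [card_eq_sum_card_fiberwise (f := fun f i => f i % b i) fun f hf => ?_]
  · refine sum_congr rfl fun y hy => ?_
    simp only [mem_filter, Fintype.mem_piFinset, mem_range] at hy
    have hle : ∑ i, y i * a i ≤ x := (sum_mul_le_card_mul hab hy.1).trans hx
    have hdvd : P ∣ x - ∑ i, y i * a i := (Nat.modEq_iff_dvd' hle).mp hy.2
    rw [card_filter_solutions_mod_eq hab hP hy.1 (by rw [Nat.mul_div_cancel' hdvd]; omega),
      card_piAntidiag_univ]
  · rw [mem_coe, mem_solutions (fun i => (hpos i).1)] at hf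
    simp only [coe_filter, Fintype.mem_piFinset, mem_range, Set.mem_ofPred_eq]
    refine ⟨fun i => Nat.mod_lt _ (hpos i).2, ?_⟩
    rw [Nat.ModEq, ← hf, sum_mul_eq_sum_mod_mul_add hab f, Nat.add_mul_mod_self_left]

end Decomposition

theorem abs_card_solutions_sub_le [DecidableEq ι] {a : ι → ℕ} (ha : ∀ i, 0 < a i)
    (hn : 2 ≤ Fintype.card ι) {i j : ι} (hij : (a i).Coprime (a j)) {P : ℕ} (hP : ∏ i, a i = P)
    {x : ℕ} (hx : Fintype.card ι * P ≤ x) :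
    |(#(solutions a x) : ℝ) - (P : ℝ) ^ (Fintype.card ι - 2) / (Fintype.card ι - 1).factorial *
        ((x / P : ℕ) : ℝ) ^ (Fintype.card ι - 1)| ≤
      2 * Fintype.card ι ^ Fintype.card ι * P ^ (Fintype.card ι - 2) *
        (x + 1) ^ (Fintype.card ι - 2) := by
  set n := Fintype.card ι with hn_def
  have hPpos : 0 < P := hP ▸ prod_pos fun i _ => ha i
  set b : ι → ℕ := fun i => P / a i
  have hab (i : ι) : a i * b i = P := Nat.mul_div_cancel' (hP ▸ dvd_prod_of_mem a (mem_univ i))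
  have hprod : ∏ i, b i = P ^ (n - 1) := by
    refine Nat.eq_of_mul_eq_mul_left hPpos ?_
    rw [← pow_succ', Nat.sub_add_cancel (by omega), ← hP, ← prod_mul_distrib, hP]
    simp [hab, n]
  set R := {y ∈ Fintype.piFinset (fun i => range (b i)) | ∑ i, y i * a i ≡ x [MOD P]}
  have hR : #R = P ^ (n - 2) := by
    refine Nat.eq_of_mul_eq_mul_right hPpos ?_
    rw [card_filter_sum_mul_modEq_mul a b hab hPpos hij, hprod, ← pow_succ]
    congr 1
    omega
  have hterm (y) (hy : y ∈ R) : |((n + (x - ∑ i, y i * a i) / P - 1).choose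
      ((x - ∑ i, y i * a i) / P) : ℝ) - ((x / P : ℕ) : ℝ) ^ (n - 1) / (n - 1).factorial| ≤
      2 * n ^ n * (x + 1) ^ (n - 2) := by
    simp only [R, mem_filter, Fintype.mem_piFinset, mem_range] at hy
    exact abs_choose_sub_pow_div_factorial_le_mul_pow hn
      (Nat.div_le_div_right (Nat.sub_le _ _))
      (Nat.div_le_sub_div_add hPpos (sum_mul_le_card_mul hab hy.1)) (Nat.div_le_self x P)
  rw [card_solutions_eq_sum hab hPpos hx, ← hn_def]
  refine le_of_eq_of_le ?_ ((abs_sum_sub_card_mul_le R _ hterm).trans_eq ?_)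
  · rw [hR, Nat.cast_pow, Nat.cast_sum, div_mul_eq_mul_div, mul_div_assoc]
  · rw [hR]
    push_cast
    ring

/-- For `d ≥ 2` pairwise coprime positive integers `a 0, …, a (d-1)` with product `P`,
the denumerant `T` satisfies `|T x - (P^(d-2)/(d-1)!)·⌊x/P⌋^(d-1)| ≤ C·(x+1)^(d-2)`
for some real constant `C`. -/
theorem denumerant_main_term (d : ℕ) (hd : 2 ≤ d) (a : Fin d → ℕ) (ha : ∀ i, 0 < a i)
    (hcop : ∀ i j, i ≠ j → Nat.Coprime (a i) (a j))
    (T : ℕ → ℕ) (hT : ∀ x, T x = {f : Fin d → ℕ | ∑ i, f i * a i = x}.ncard)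
    (P : ℕ) (hP : P = ∏ i, a i) :
    ∃ C : ℝ, ∀ x : ℕ,
      |(T x : ℝ) - (P : ℝ) ^ (d - 2) / (Nat.factorial (d - 1)) * (x / P : ℕ) ^ (d - 1)| ≤
        C * (x + 1 : ℝ) ^ (d - 2) := by
  have hT_card (x : ℕ) : T x = #(solutions a x) := by
    rw [hT, ← Set.ncard_coe_finset]
    congr 1
    ext f
    exact (mem_solutions ha).symm
  have hcop01 := hcop ⟨0, by omega⟩ ⟨1, by omega⟩ (by simp [Fin.ext_iff])
  refine exists_forall_abs_le_mul_of_eventually_le _ _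
    (fun x => one_le_pow₀ (by linarith [x.cast_nonneg (α := ℝ)])) (2 * d ^ d * P ^ (d - 2))
    (eventually_atTop.mpr ⟨d * P, fun x hx => ?_⟩)
  rw [hT_card]
  simpa using abs_card_solutions_sub_le ha (by simpa using hd) hcop01 hP.symm (by simpa using hx)
end
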